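/- arXiv:0908.2353 — 6 statements merged into one kernel-verified Lean document; each statement's English description precedes it below -/
import Mathlib

section
/- Let g₁ and g₀ be Lie algebras over a field k of characteristic 0, let s, t : g₁ → g₀ and i : g₀ → g₁ be Lie algebra homomorphisms with s ∘ i = id and t ∘ i = id, and let m be a map from the fiber product {(f,g) ∈ g₁ × g₁ : t(f) = s(g)} (a Lie subalgebra of g₁ × g₁ with componentwise bracket) to g₁ which is a Lie algebra homomorphism and satisfies the unit laws m(i(s(g)), g) = g and m(f, i(t(f))) = f for all f, g ∈ g₁. Then [x, y] = 0 for every x ∈ ker(s) and every y ∈ ker(t). -/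
/-!
An arrow `x` with source `0` satisfies `x = m 0 x`, and an arrow `y` with target `0` satisfies
`y = m y 0`. Since `m` preserves brackets componentwise, this interchange gives
`⁅x, y⁆ = ⁅m 0 x, m y 0⁆ = m ⁅0, y⁆ ⁅x, 0⁆ = m 0 0`, and `m 0 0 = 0` is the unit law at `0`.
-/

section UnitLaws

variable {A B F G : Type*} [Zero A] [Zero B] [FunLike F A B] [FunLike G B A] [ZeroHomClass G B A]
  {i : G} {m : A → A → A}

theorem comp_zero_left_of_source_eq_zero {s : F} (hm_unit_left : ∀ g, m (i (s g)) g = g) {x : A}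
    (hx : s x = 0) : m 0 x = x := by
  simpa only [hx, map_zero] using hm_unit_left x

theorem comp_zero_right_of_target_eq_zero {t : F} (hm_unit_right : ∀ f, m f (i (t f)) = f)
    {y : A} (hy : t y = 0) : m y 0 = y := by
  simpa only [hy, map_zero] using hm_unit_right y

theorem comp_zero_zero [ZeroHomClass F A B] {s : F} (hm_unit_left : ∀ g, m (i (s g)) g = g) :
    m 0 0 = 0 :=
  comp_zero_left_of_source_eq_zero hm_unit_left (map_zero s)

end UnitLaws

theorem lie2alg_ker_s_ker_t_commute_general
    (k : Type*) [Field k]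
    (g₀ g₁ : Type*) [LieRing g₀] [LieAlgebra k g₀] [LieRing g₁] [LieAlgebra k g₁]
    (s t : g₁ →ₗ⁅k⁆ g₀) (i : g₀ →ₗ⁅k⁆ g₁)
    (m : g₁ → g₁ → g₁)
    -- `m` preserves the (componentwise) Lie bracket on the fiber product
    (hm_bracket : ∀ f₁ g₁' f₂ g₂ : g₁, t f₁ = s g₁' → t f₂ = s g₂ →
      m ⁅f₁, f₂⁆ ⁅g₁', g₂⁆ = ⁅m f₁ g₁', m f₂ g₂⁆)
    -- unit laws of the categorical composition
    (hm_unit_left : ∀ g : g₁, m (i (s g)) g = g)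
    (hm_unit_right : ∀ f : g₁, m f (i (t f)) = f) :
    ∀ x y : g₁, s x = 0 → t y = 0 → ⁅x, y⁆ = 0 := by
  intro x y hx hy
  calc ⁅x, y⁆
      = ⁅m 0 x, m y 0⁆ := by
        rw [comp_zero_left_of_source_eq_zero hm_unit_left hx,
          comp_zero_right_of_target_eq_zero hm_unit_right hy]
    _ = m ⁅0, y⁆ ⁅x, 0⁆ :=
        (hm_bracket 0 x y 0 (by rw [map_zero, hx]) (by rw [map_zero, hy])).symm
    _ = 0 := by rw [zero_lie, lie_zero, comp_zero_zero hm_unit_left]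

/-- In a strict Lie 2-algebra, the kernel of the source map and the kernel of the
target map commute: `[ker s, ker t] = 0`. -/
theorem lie2alg_ker_s_ker_t_commute
    (k : Type*) [Field k] [CharZero k]
    (g₀ g₁ : Type*) [LieRing g₀] [LieAlgebra k g₀] [LieRing g₁] [LieAlgebra k g₁]
    (s t : g₁ →ₗ⁅k⁆ g₀) (i : g₀ →ₗ⁅k⁆ g₁)
    (hsi : ∀ n, s (i n) = n) (hti : ∀ n, t (i n) = n)
    (m : g₁ → g₁ → g₁)
    -- `m` is additive on the fiber product
    (hm_add : ∀ f₁ g₁' f₂ g₂ : g₁, t f₁ = s g₁' → t f₂ = s g₂ →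
      m (f₁ + f₂) (g₁' + g₂) = m f₁ g₁' + m f₂ g₂)
    -- `m` is homogeneous on the fiber product
    (hm_smul : ∀ (c : k) (f g : g₁), t f = s g → m (c • f) (c • g) = c • m f g)
    -- `m` preserves the (componentwise) Lie bracket on the fiber product
    (hm_bracket : ∀ f₁ g₁' f₂ g₂ : g₁, t f₁ = s g₁' → t f₂ = s g₂ →
      m ⁅f₁, f₂⁆ ⁅g₁', g₂⁆ = ⁅m f₁ g₁', m f₂ g₂⁆)
    -- unit laws of the categorical composition
    (hm_unit_left : ∀ g : g₁, m (i (s g)) g = g)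
    (hm_unit_right : ∀ f : g₁, m f (i (t f)) = f) :
    ∀ x y : g₁, s x = 0 → t y = 0 → ⁅x, y⁆ = 0 :=
  lie2alg_ker_s_ker_t_commute_general k g₀ g₁ s t i m hm_bracket hm_unit_left hm_unit_right
end

section
/- Let G₁ and G₀ be groups, let s, t : G₁ → G₀ and i : G₀ → G₁ be group homomorphisms with s ∘ i = id and t ∘ i = id, and suppose the map m(f,g) := f · i(t(f))⁻¹ · g on the fiber product {(f,g) : t(f) = s(g)} is a group homomorphism with respect to componentwise multiplication. Set M := ker(s), μ := t restricted to M, and for n ∈ G₀ and x ∈ M set ⁿx := i(n) · x · i(n)⁻¹. Then: (1) ⁿx ∈ M, and (x,n) ↦ ⁿx is an action of G₀ on M by group automorphisms; (2) μ(ⁿx) = n · μ(x) · n⁻¹ for all n ∈ G₀, x ∈ M; (3) ^{μ(x)}x' = x · x' · x⁻¹ for all x, x' ∈ M. In other words, μ : M → G₀ with this action is a crossed module of groups. -/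
/-! The interchange law for `m`, applied to the composable pairs `(1, x')` and `(y, 1)`, says that
every `y ∈ ker t` commutes with every `x' ∈ ker s`. Writing `x = i (t x) * y` with
`y := (i (t x))⁻¹ * x ∈ ker t`, conjugation by `i (t x)` therefore agrees with conjugation by `x`
on `ker s`, which is the Peiffer identity. The remaining axioms only use that `s` and `t` are
homomorphisms split by `i`. -/

section TwoGroup

variable {G₀ G₁ : Type*} [Group G₀] [Group G₁]

def CompositionIsMulHom (s t : G₁ →* G₀) (i : G₀ →* G₁) : Prop :=
  ∀ f₁ g₁ f₂ g₂ : G₁, t f₁ = s g₁ → t f₂ = s g₂ →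
    (f₁ * f₂) * (i (t (f₁ * f₂)))⁻¹ * (g₁ * g₂)
      = (f₁ * (i (t f₁))⁻¹ * g₁) * (f₂ * (i (t f₂))⁻¹ * g₂)

theorem map_conj_of_section (f : G₁ →* G₀) {i : G₀ →* G₁} (hfi : ∀ n, f (i n) = n)
    (n : G₀) (x : G₁) : f (i n * x * (i n)⁻¹) = n * f x * n⁻¹ := by
  simp only [map_mul, map_inv, hfi]

theorem commute_of_mem_ker_of_mem_ker {s t : G₁ →* G₀} {i : G₀ →* G₁}
    (hm_mul : CompositionIsMulHom s t i)
    {y x : G₁} (hy : t y = 1) (hx : s x = 1) : Commute y x := by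
  have h := hm_mul 1 x y 1 (by rw [map_one, hx]) (by rw [map_one, hy])
  simpa only [Commute, SemiconjBy, one_mul, mul_one, hy, map_one, inv_one] using h

theorem conj_section_target_eq_conj {s t : G₁ →* G₀} {i : G₀ →* G₁}
    (hti : ∀ n, t (i n) = n)
    (hm_mul : CompositionIsMulHom s t i)
    (x : G₁) {x' : G₁} (hx' : s x' = 1) : i (t x) * x' * (i (t x))⁻¹ = x * x' * x⁻¹ := by
  set y := (i (t x))⁻¹ * x
  have hy : t y = 1 := by simp only [y, map_mul, map_inv, hti, inv_mul_cancel]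
  have hcomm : y * x' = x' * y := commute_of_mem_ker_of_mem_ker hm_mul hy hx'
  calc i (t x) * x' * (i (t x))⁻¹
      = i (t x) * (x' * y) * x⁻¹ := by simp only [y]; group
    _ = i (t x) * (y * x') * x⁻¹ := by rw [hcomm]
    _ = x * x' * x⁻¹ := by simp only [y]; group

end TwoGroup

/-- From a strict 2-group one obtains a crossed module of groups:
`μ := t|_{ker s} : ker s → G₀` with the action `ⁿx := i n * x * (i n)⁻¹`. -/
theorem twoGroup_gives_crossedModule
    (G₀ G₁ : Type*) [Group G₀] [Group G₁]
    (s t : G₁ →* G₀) (i : G₀ →* G₁)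
    (hsi : ∀ n, s (i n) = n) (hti : ∀ n, t (i n) = n)
    (hm_mul : ∀ f₁ g₁ f₂ g₂ : G₁, t f₁ = s g₁ → t f₂ = s g₂ →
      (f₁ * f₂) * (i (t (f₁ * f₂)))⁻¹ * (g₁ * g₂)
        = (f₁ * (i (t f₁))⁻¹ * g₁) * (f₂ * (i (t f₂))⁻¹ * g₂)) :
    -- (1) the action is well defined on M := ker s …
    (∀ (n : G₀) (x : G₁), s x = 1 → s (i n * x * (i n)⁻¹) = 1) ∧
    -- … it is an action …
    (∀ (n n' : G₀) (x : G₁), i (n * n') * x * (i (n * n'))⁻¹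
        = i n * (i n' * x * (i n')⁻¹) * (i n)⁻¹) ∧
    (∀ x : G₁, i (1 : G₀) * x * (i (1 : G₀))⁻¹ = x) ∧
    -- … by group automorphisms
    (∀ (n : G₀) (x x' : G₁), i n * (x * x') * (i n)⁻¹
        = (i n * x * (i n)⁻¹) * (i n * x' * (i n)⁻¹)) ∧
    -- (2) equivariance axiom: μ(ⁿx) = n · μ(x) · n⁻¹
    (∀ (n : G₀) (x : G₁), s x = 1 → t (i n * x * (i n)⁻¹) = n * t x * n⁻¹) ∧
    -- (3) Peiffer identity: ^{μ(x)}x' = x · x' · x⁻¹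
    (∀ x x' : G₁, s x = 1 → s x' = 1 → i (t x) * x' * (i (t x))⁻¹ = x * x' * x⁻¹) := by
  refine ⟨fun n x hx => ?_, fun n n' x => ?_, fun x => ?_, fun n x x' => ?_,
    fun n x _ => map_conj_of_section t hti n x,
    fun x _ _ hx' => conj_section_target_eq_conj hti hm_mul x hx'⟩
  · rw [map_conj_of_section s hsi, hx, mul_one, mul_inv_cancel]
  · rw [map_mul]; group
  · rw [map_one, one_mul, inv_one, mul_one]
  · group
end

section
/- Let μ : M → N with action φ : N → Aut(M) (written ⁿm := φ(n)(m)) be a crossed module of groups, and let G₁ := M ⋊_φ N with s(m,n) = n, t(m,n) = μ(m)·n, i(n) = (1,n). Define the composition c(f,g) := f · i(t(f))⁻¹ · g for composable pairs f, g ∈ G₁ with t(f) = s(g). Then c is a group homomorphism on the fiber product: for all f₁, f₂, g₁, g₂ ∈ G₁ with t(f₁) = s(g₁) and t(f₂) = s(g₂), one has c(f₁·f₂, g₁·g₂) = c(f₁,g₁) · c(f₂,g₂). (This middle-four exchange property uses the Peiffer identity ^{μ(m)}m' = m·m'·m⁻¹.) -/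
/-!
With `t` a homomorphism (this is condition (a)) and `s ∘ i = t ∘ i = id`, both sides of the
interchange law are `f₁ * x * g₂`, with `x = b * a` on the left and `x = a * b` on the right,
where `a = i (t f₁)⁻¹ * g₁ ∈ ker s` and `b = f₂ * i (t f₂)⁻¹ ∈ ker t`. The Peiffer identity (b)
is exactly what makes `ker s` and `ker t` commute in `M ⋊ N`.
-/

theorem interchange_of_commute_ker {G H : Type*} [Group G] [Group H] (s t : G →* H)
    (i : H →* G) (hs : ∀ h, s (i h) = h) (ht : ∀ h, t (i h) = h)
    (hcomm : ∀ a ∈ s.ker, ∀ b ∈ t.ker, Commute a b) {f₁ f₂ g₁ g₂ : G}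
    (h₁ : t f₁ = s g₁) :
    f₁ * f₂ * (i (t (f₁ * f₂)))⁻¹ * (g₁ * g₂)
      = f₁ * (i (t f₁))⁻¹ * g₁ * (f₂ * (i (t f₂))⁻¹ * g₂) := by
  set a := (i (t f₁))⁻¹ * g₁
  set b := f₂ * (i (t f₂))⁻¹
  have ha : a ∈ s.ker := by simp [a, hs, h₁]
  have hb : b ∈ t.ker := by simp [b, ht]
  calc f₁ * f₂ * (i (t (f₁ * f₂)))⁻¹ * (g₁ * g₂) = f₁ * (b * a) * g₂ := by
        simp only [a, b, map_mul, mul_inv_rev, mul_assoc]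
    _ = f₁ * (a * b) * g₂ := by rw [(hcomm a ha b hb).eq]
    _ = f₁ * (i (t f₁))⁻¹ * g₁ * (f₂ * (i (t f₂))⁻¹ * g₂) := by
        simp only [a, b, mul_assoc]

namespace SemidirectProduct

variable {M N : Type*} [Group M] [Group N] {φ : N →* MulAut M}

def target (μ : M →* N) (hμ : ∀ (n : N) (m : M), μ (φ n m) = n * μ m * n⁻¹) :
    M ⋊[φ] N →* N :=
  lift μ (MonoidHom.id N) fun n => by ext m; simp [hμ]

theorem commute_of_right_eq_one_of_target_eq_one {μ : M →* N}
    (hμ : ∀ m m' : M, φ (μ m) m' = m * m' * m⁻¹) {a b : M ⋊[φ] N} (ha : a.right = 1)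
    (hb : μ b.left * b.right = 1) : Commute a b := by
  have hb' : b.right = μ b.left⁻¹ := by rw [map_inv]; exact eq_inv_of_mul_eq_one_right hb
  ext
  · simp only [mul_left, ha, hb', map_one, MulAut.one_apply, hμ]
    group
  · simp [ha]

end SemidirectProduct

open SemidirectProduct in
/-- For a crossed module of groups `μ : M → N` with action `φ`, the composition
`c f g := f * (i (t f))⁻¹ * g` on the 2-group `M ⋊[φ] N` (with `s (m,n) = n`,
`t (m,n) = μ m * n`, `i n = (1,n)`) satisfies the middle-four exchange property,
i.e. it is a group homomorphism on the fiber product. -/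
theorem crossedModule_composition_is_hom
    (M N : Type*) [Group M] [Group N]
    (μ : M →* N) (φ : N →* MulAut M)
    (ha : ∀ (n : N) (m : M), μ (φ n m) = n * μ m * n⁻¹)
    (hb : ∀ m m' : M, φ (μ m) m' = m * m' * m⁻¹) :
    ∀ f₁ f₂ g₁ g₂ : M ⋊[φ] N,
      μ f₁.left * f₁.right = g₁.right →
      μ f₂.left * f₂.right = g₂.right →
      (f₁ * f₂) * ((⟨1, μ (f₁ * f₂).left * (f₁ * f₂).right⟩ : M ⋊[φ] N))⁻¹ * (g₁ * g₂)
        = (f₁ * ((⟨1, μ f₁.left * f₁.right⟩ : M ⋊[φ] N))⁻¹ * g₁) *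
          (f₂ * ((⟨1, μ f₂.left * f₂.right⟩ : M ⋊[φ] N))⁻¹ * g₂) := by
  intro f₁ f₂ g₁ g₂ h₁ _
  exact interchange_of_commute_ker rightHom (target μ ha) inr rightHom_inr (lift_inr _ _ _)
    (fun _ hs _ ht => commute_of_right_eq_one_of_target_eq_one hb hs ht) h₁
end

section
/- Let g₁ and g₀ be Lie algebras over a field k of characteristic 0, let s, t : g₁ → g₀ and i : g₀ → g₁ be Lie algebra homomorphisms with s ∘ i = id and t ∘ i = id, and suppose the map m(f,g) := f + g − i(t(f)), defined on the fiber product {(f,g) ∈ g₁ × g₁ : t(f) = s(g)}, is a Lie algebra homomorphism with respect to the componentwise bracket. Set 𝔪 := ker(s), μ := t restricted to 𝔪, and for n ∈ g₀ and x ∈ 𝔪 set n·x := [i(n), x] (bracket in g₁). Then: (1) n·x ∈ 𝔪, and (n,x) ↦ n·x is an action of g₀ on 𝔪 by derivations of the Lie bracket of 𝔪; (2) μ(n·x) = [n, μ(x)] for all n ∈ g₀, x ∈ 𝔪; (3) μ(x)·x' = [x, x'] for all x, x' ∈ 𝔪. In other words, μ : 𝔪 → g₀ with this action is a crossed module of Lie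 algebras. -/
namespace LieHom

variable {R L₀ L₁ : Type*} [CommRing R] [LieRing L₀] [LieAlgebra R L₀] [LieRing L₁]
  [LieAlgebra R L₁]

/-- The composition `m f g = f + g - i (t f)` of a strict Lie 2-algebra with source `s`, target
`t` and identities `i` is a Lie algebra morphism on composable pairs `t f = s g`. -/
def CompositionPreservesLie (s t : L₁ →ₗ⁅R⁆ L₀) (i : L₀ →ₗ⁅R⁆ L₁) : Prop :=
  ∀ f₁ g₁ f₂ g₂ : L₁, t f₁ = s g₁ → t f₂ = s g₂ →
    ⁅f₁, f₂⁆ + ⁅g₁, g₂⁆ - i (t ⁅f₁, f₂⁆) = ⁅f₁ + g₁ - i (t f₁), f₂ + g₂ - i (t f₂)⁆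

/-- Apply the composition to the composable pairs `(x, i (t x))` and `(0, x')`. -/
theorem lie_section_target_eq_lie {s t : L₁ →ₗ⁅R⁆ L₀} {i : L₀ →ₗ⁅R⁆ L₁}
    (hsi : ∀ n, s (i n) = n) (hm : CompositionPreservesLie s t i) (x : L₁) {x' : L₁}
    (hx' : s x' = 0) : ⁅i (t x), x'⁆ = ⁅x, x'⁆ := by
  have h := hm x (i (t x)) 0 x' (hsi _).symm (by rw [map_zero, hx'])
  simpa only [lie_zero, zero_lie, map_zero, add_zero, zero_add, sub_zero,
    add_sub_cancel_right] using h

end LieHom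

theorem lie2alg_gives_crossedModule_general
    (k : Type*) [Field k]
    (g₀ g₁ : Type*) [LieRing g₀] [LieAlgebra k g₀] [LieRing g₁] [LieAlgebra k g₁]
    (s t : g₁ →ₗ⁅k⁆ g₀) (i : g₀ →ₗ⁅k⁆ g₁)
    (hsi : ∀ n, s (i n) = n) (hti : ∀ n, t (i n) = n)
    (hm_bracket : ∀ f₁ g₁' f₂ g₂ : g₁, t f₁ = s g₁' → t f₂ = s g₂ →
      ⁅f₁, f₂⁆ + ⁅g₁', g₂⁆ - i (t ⁅f₁, f₂⁆)
        = ⁅f₁ + g₁' - i (t f₁), f₂ + g₂ - i (t f₂)⁆) :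
    -- (1) the action preserves 𝔪 := ker s …
    (∀ (n : g₀) (x : g₁), s x = 0 → s ⁅i n, x⁆ = 0) ∧
    -- … it is a Lie algebra action …
    (∀ (n n' : g₀) (x : g₁), s x = 0 →
      ⁅i ⁅n, n'⁆, x⁆ = ⁅i n, ⁅i n', x⁆⁆ - ⁅i n', ⁅i n, x⁆⁆) ∧
    -- … by derivations of the bracket of 𝔪
    (∀ (n : g₀) (x x' : g₁), s x = 0 → s x' = 0 →
      ⁅i n, ⁅x, x'⁆⁆ = ⁅⁅i n, x⁆, x'⁆ + ⁅x, ⁅i n, x'⁆⁆) ∧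
    -- (2) equivariance axiom: μ(n·x) = ⁅n, μ(x)⁆
    (∀ (n : g₀) (x : g₁), s x = 0 → t ⁅i n, x⁆ = ⁅n, t x⁆) ∧
    -- (3) Peiffer identity: μ(x)·x' = ⁅x, x'⁆
    (∀ x x' : g₁, s x = 0 → s x' = 0 → ⁅i (t x), x'⁆ = ⁅x, x'⁆) :=
  ⟨fun _ _ hx => s.mem_ker.mp (s.ker.lie_mem (s.mem_ker.mpr hx)),
    fun n n' x _ => by rw [i.map_lie, lie_lie],
    fun _ _ _ _ _ => leibniz_lie _ _ _,
    fun n x _ => by rw [t.map_lie, hti],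
    fun x _ _ hx' => LieHom.lie_section_target_eq_lie hsi hm_bracket x hx'⟩

/-- From a strict Lie 2-algebra (with composition `m f g = f + g - i (t f)` a Lie
algebra homomorphism on composable pairs) one obtains a crossed module of Lie
algebras: `μ := t|_{ker s} : ker s → g₀` with the action `n·x := ⁅i n, x⁆`. -/
theorem lie2alg_gives_crossedModule
    (k : Type*) [Field k] [CharZero k]
    (g₀ g₁ : Type*) [LieRing g₀] [LieAlgebra k g₀] [LieRing g₁] [LieAlgebra k g₁]
    (s t : g₁ →ₗ⁅k⁆ g₀) (i : g₀ →ₗ⁅k⁆ g₁)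
    (hsi : ∀ n, s (i n) = n) (hti : ∀ n, t (i n) = n)
    (hm_bracket : ∀ f₁ g₁' f₂ g₂ : g₁, t f₁ = s g₁' → t f₂ = s g₂ →
      ⁅f₁, f₂⁆ + ⁅g₁', g₂⁆ - i (t ⁅f₁, f₂⁆)
        = ⁅f₁ + g₁' - i (t f₁), f₂ + g₂ - i (t f₂)⁆) :
    -- (1) the action preserves 𝔪 := ker s …
    (∀ (n : g₀) (x : g₁), s x = 0 → s ⁅i n, x⁆ = 0) ∧
    -- … it is a Lie algebra action …
    (∀ (n n' : g₀) (x : g₁), s x = 0 →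
      ⁅i ⁅n, n'⁆, x⁆ = ⁅i n, ⁅i n', x⁆⁆ - ⁅i n', ⁅i n, x⁆⁆) ∧
    -- … by derivations of the bracket of 𝔪
    (∀ (n : g₀) (x x' : g₁), s x = 0 → s x' = 0 →
      ⁅i n, ⁅x, x'⁆⁆ = ⁅⁅i n, x⁆, x'⁆ + ⁅x, ⁅i n, x'⁆⁆) ∧
    -- (2) equivariance axiom: μ(n·x) = ⁅n, μ(x)⁆
    (∀ (n : g₀) (x : g₁), s x = 0 → t ⁅i n, x⁆ = ⁅n, t x⁆) ∧
    -- (3) Peiffer identity: μ(x)·x' = ⁅x, x'⁆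
    (∀ x x' : g₁, s x = 0 → s x' = 0 → ⁅i (t x), x'⁆ = ⁅x, x'⁆) :=
  lie2alg_gives_crossedModule_general k g₀ g₁ s t i hsi hti hm_bracket
end

section
/- Let K and L be Hopf algebras over a field k of characteristic 0 and let ρ : L → K ⊗ L be a k-algebra homomorphism which is a coassociative counital left coaction ((id_K ⊗ ρ) ∘ ρ = (Δ_K ⊗ id_L) ∘ ρ, (ε_K ⊗ id_L) ∘ ρ = id_L). Suppose in addition that Δ_L is a morphism of K-comodules: (id_K ⊗ Δ_L) ∘ ρ = ρ_{L⊗L} ∘ Δ_L, where ρ_{L⊗L} := (μ_K ⊗ id_L ⊗ id_L) ∘ (id_K ⊗ τ_{L,K} ⊗ id_L) ∘ (ρ ⊗ ρ). Then the action ⋆_ρ of χ(K) on χ(L), given by η ⋆_ρ φ := μ_k ∘ (η ⊗ φ) ∘ ρ, is an action by group automorphisms of the character group (χ(L), ⋆): for every character η of K and all characters φ, ψ of L, η ⋆_ρ (φ ⋆ ψ) = (η ⋆_ρ φ) ⋆ (η ⋆_ρ ψ), where φ ⋆ ψ = μ_k ∘ (φ ⊗ ψ) ∘ Δ_L. -/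
/-! Rewriting `(id ⊗ Δ_L) ∘ ρ` by the comodule-coalgebra condition turns `η ⋆_ρ (φ ⋆ ψ)` into
`μ_k ∘ (η ⊗ μ_k ∘ (φ ⊗ ψ)) ∘ (μ_K ⊗ id) ∘ (id ⊗ τ ⊗ id) ∘ (ρ ⊗ ρ) ∘ Δ_L`; since `η` is
multiplicative, the pairing `a ⊗ m ⊗ b ⊗ n ↦ η(a b) φ(m) ψ(n)` factors as
`(η(a) φ(m)) (η(b) ψ(n))`, which is `(η ⋆_ρ φ) ⋆ (η ⋆_ρ ψ)` after `(ρ ⊗ ρ) ∘ Δ_L`. -/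

open TensorProduct

/-- The convolution product `φ ⋆ ψ := μ_k ∘ (φ ⊗ ψ) ∘ Δ` of linear functionals on
a bialgebra. -/
noncomputable def hopfConv {k L : Type*} [CommRing k] [Ring L] [Bialgebra k L]
    (φ ψ : L →ₗ[k] k) : L →ₗ[k] k :=
  LinearMap.mul' k k ∘ₗ TensorProduct.map φ ψ ∘ₗ Coalgebra.comul

/-- The pairing `η ⋆_ρ φ := μ_k ∘ (η ⊗ φ) ∘ ρ` along a coaction `ρ : L → K ⊗ L`. -/
noncomputable def coactConv {k K L : Type*} [CommRing k] [Ring K] [Bialgebra k K]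
    [Ring L] [Bialgebra k L] (ρ : L →ₐ[k] K ⊗[k] L)
    (η : K →ₗ[k] k) (φ : L →ₗ[k] k) : L →ₗ[k] k :=
  LinearMap.mul' k k ∘ₗ TensorProduct.map η φ ∘ₗ ρ.toLinearMap

open LinearMap in
theorem mul'_comp_map_algHom_comp_map_mul'_tensorTensorTensorComm
    {k K M : Type*} [CommSemiring k] [Semiring K] [Algebra k K] [AddCommMonoid M] [Module k M]
    (η : K →ₐ[k] k) (φ ψ : M →ₗ[k] k) :
    mul' k k ∘ₗ map η.toLinearMap (mul' k k ∘ₗ map φ ψ) ∘ₗ map (mul' k K) id ∘ₗ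
        (tensorTensorTensorComm k K M K M).toLinearMap
      = mul' k k ∘ₗ map (mul' k k ∘ₗ map η.toLinearMap φ) (mul' k k ∘ₗ map η.toLinearMap ψ) := by
  ext a m b n
  simp [mul_mul_mul_comm]

theorem coactConv_hopfConv_of_comul_comp_eq
    {k K L : Type*} [CommRing k] [Ring K] [Bialgebra k K] [Ring L] [Bialgebra k L]
    (ρ : L →ₐ[k] K ⊗[k] L)
    (hρ : map LinearMap.id Coalgebra.comul ∘ₗ ρ.toLinearMap
      = map (LinearMap.mul' k K) LinearMap.id ∘ₗ (tensorTensorTensorComm k K L K L).toLinearMap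
          ∘ₗ map ρ.toLinearMap ρ.toLinearMap ∘ₗ Coalgebra.comul)
    (η : K →ₐ[k] k) (φ ψ : L →ₗ[k] k) :
    coactConv ρ η.toLinearMap (hopfConv φ ψ)
      = hopfConv (coactConv ρ η.toLinearMap φ) (coactConv ρ η.toLinearMap ψ) := by
  calc coactConv ρ η.toLinearMap (hopfConv φ ψ)
      = LinearMap.mul' k k ∘ₗ map η.toLinearMap (LinearMap.mul' k k ∘ₗ map φ ψ) ∘ₗ
          (map LinearMap.id Coalgebra.comul ∘ₗ ρ.toLinearMap) := by
        rw [← LinearMap.comp_assoc ρ.toLinearMap (map LinearMap.id _), ← map_comp,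
          LinearMap.comp_id]
        rfl
    _ = (LinearMap.mul' k k ∘ₗ map η.toLinearMap (LinearMap.mul' k k ∘ₗ map φ ψ) ∘ₗ
          map (LinearMap.mul' k K) LinearMap.id ∘ₗ
          (tensorTensorTensorComm k K L K L).toLinearMap) ∘ₗ
          map ρ.toLinearMap ρ.toLinearMap ∘ₗ Coalgebra.comul := by
        rw [hρ]; simp only [LinearMap.comp_assoc]
    _ = hopfConv (coactConv ρ η.toLinearMap φ) (coactConv ρ η.toLinearMap ψ) := by
        rw [mul'_comp_map_algHom_comp_map_mul'_tensorTensorTensorComm]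
        simp only [hopfConv, coactConv, map_comp, LinearMap.comp_assoc]

theorem comodule_coalgebra_action_by_automorphisms_general
    (k : Type*) [Field k]
    (K : Type*) [Ring K] [HopfAlgebra k K]
    (L : Type*) [Ring L] [HopfAlgebra k L]
    (ρ : L →ₐ[k] K ⊗[k] L)
    -- `Δ_L` is a morphism of `K`-comodules:
    -- (id_K ⊗ Δ_L) ∘ ρ = (μ_K ⊗ id ⊗ id) ∘ (id ⊗ τ ⊗ id) ∘ (ρ ⊗ ρ) ∘ Δ_L
    (h_comod_coalg : ∀ x : L,
      (TensorProduct.map LinearMap.id (Coalgebra.comul (R := k))) (ρ x)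
        = (TensorProduct.map (LinearMap.mul' k K) LinearMap.id)
            ((TensorProduct.tensorTensorTensorComm k K L K L)
              ((TensorProduct.map ρ.toLinearMap ρ.toLinearMap)
                (Coalgebra.comul (R := k) x)))) :
    ∀ (η : K →ₐ[k] k) (φ ψ : L →ₐ[k] k),
      coactConv ρ η.toLinearMap (hopfConv φ.toLinearMap ψ.toLinearMap)
        = hopfConv (coactConv ρ η.toLinearMap φ.toLinearMap)
            (coactConv ρ η.toLinearMap ψ.toLinearMap) := fun η φ ψ =>
  coactConv_hopfConv_of_comul_comp_eq ρ (LinearMap.ext h_comod_coalg) η φ.toLinearMap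
    ψ.toLinearMap

/-- If `(L, ρ)` is a left `K`-comodule algebra and additionally a left `K`-comodule
coalgebra (`Δ_L` is a morphism of `K`-comodules), then the action `⋆_ρ` of `χ(K)`
on `χ(L)` is an action by group automorphisms of the character group `(χ(L), ⋆)`. -/
theorem comodule_coalgebra_action_by_automorphisms
    (k : Type*) [Field k] [CharZero k]
    (K : Type*) [Ring K] [HopfAlgebra k K]
    (L : Type*) [Ring L] [HopfAlgebra k L]
    (ρ : L →ₐ[k] K ⊗[k] L)
    -- coassociativity: (id_K ⊗ ρ) ∘ ρ = (Δ_K ⊗ id_L) ∘ ρ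
    (h_coassoc : ∀ x : L,
      (TensorProduct.map LinearMap.id ρ.toLinearMap) (ρ x)
        = (TensorProduct.assoc k K K L)
            ((TensorProduct.map (Coalgebra.comul (R := k)) LinearMap.id) (ρ x)))
    -- counitality: (ε_K ⊗ id_L) ∘ ρ = id_L
    (h_counit : ∀ x : L,
      (TensorProduct.lid k L)
        ((TensorProduct.map (Coalgebra.counit (R := k)) LinearMap.id) (ρ x)) = x)
    -- `Δ_L` is a morphism of `K`-comodules:
    -- (id_K ⊗ Δ_L) ∘ ρ = (μ_K ⊗ id ⊗ id) ∘ (id ⊗ τ ⊗ id) ∘ (ρ ⊗ ρ) ∘ Δ_L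
    (h_comod_coalg : ∀ x : L,
      (TensorProduct.map LinearMap.id (Coalgebra.comul (R := k))) (ρ x)
        = (TensorProduct.map (LinearMap.mul' k K) LinearMap.id)
            ((TensorProduct.tensorTensorTensorComm k K L K L)
              ((TensorProduct.map ρ.toLinearMap ρ.toLinearMap)
                (Coalgebra.comul (R := k) x)))) :
    ∀ (η : K →ₐ[k] k) (φ ψ : L →ₐ[k] k),
      coactConv ρ η.toLinearMap (hopfConv φ.toLinearMap ψ.toLinearMap)
        = hopfConv (coactConv ρ η.toLinearMap φ.toLinearMap)
            (coactConv ρ η.toLinearMap ψ.toLinearMap) :=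
  comodule_coalgebra_action_by_automorphisms_general k K L ρ h_comod_coalg
end

section
/- Let K and L be Hopf algebras over a field k of characteristic 0, let ζ : K → L be a bialgebra homomorphism, and let ρ : L → K ⊗ L be a k-algebra homomorphism which is a coassociative counital left coaction. Suppose the crossed comodule condition (ii) holds: ρ ∘ ζ = (id_K ⊗ ζ) ∘ coad_K, where coad_K := (μ_K ⊗ id_K) ∘ (id_K ⊗ τ_{K,K}) ∘ (Δ_K ⊗ S_K) ∘ Δ_K. Then for every character η of K and every character ψ of L one has (η ⋆_ρ ψ) ∘ ζ = η ⋆ (ψ ∘ ζ) ⋆ (η ∘ S_K) in χ(K), where η ⋆_ρ ψ := μ_k ∘ (η ⊗ ψ) ∘ ρ and ⋆ is convolution in χ(K). That is, writing μ := (− ∘ ζ) : χ(L) → χ(K), the crossed module axiom (a) μ(η ⋆_ρ ψ) = η ⋆ μ(ψ) ⋆ η⁻¹ holds. -/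
open TensorProduct

/-- The adjoint coaction `coad_K = (μ_K ⊗ id) ∘ (id ⊗ τ) ∘ (Δ_K ⊗ S_K) ∘ Δ_K`. -/
noncomputable def hopfCoad {k K : Type*} [CommRing k] [Ring K] [HopfAlgebra k K] :
    K →ₗ[k] K ⊗[k] K :=
  TensorProduct.map (LinearMap.mul' k K) LinearMap.id
    ∘ₗ (TensorProduct.assoc k K K K).symm.toLinearMap
    ∘ₗ TensorProduct.map LinearMap.id (TensorProduct.comm k K K).toLinearMap
    ∘ₗ (TensorProduct.assoc k K K K).toLinearMap
    ∘ₗ TensorProduct.map Coalgebra.comul (HopfAlgebra.antipode (R := k))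
    ∘ₗ Coalgebra.comul

/-!
By condition (ii), `(η ⋆_ρ ψ) ∘ ζ = μ_k ∘ (η ⊗ ψ ∘ ζ) ∘ coad_K`. In Sweedler notation
`coad_K x = ∑ x₍₁₎ S(x₍₃₎) ⊗ x₍₂₎`, so multiplicativity of `η` turns this into
`∑ η(x₍₁₎) ψ(ζ x₍₂₎) η(S x₍₃₎) = (η ⋆ ψ ∘ ζ ⋆ η ∘ S)(x)`.
-/

theorem mul'_comp_map_comp_hopfCoad {k K : Type*} [CommRing k] [Ring K] [HopfAlgebra k K]
    (η : K →ₐ[k] k) (φ : K →ₗ[k] k) :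
    LinearMap.mul' k k ∘ₗ TensorProduct.map η.toLinearMap φ ∘ₗ hopfCoad
      = hopfConv (hopfConv η.toLinearMap φ) (η.toLinearMap ∘ₗ HopfAlgebra.antipode k) := by
  have h_char : LinearMap.mul' k k ∘ₗ TensorProduct.map η.toLinearMap φ
        ∘ₗ TensorProduct.map (LinearMap.mul' k K) LinearMap.id
        ∘ₗ (TensorProduct.assoc k K K K).symm.toLinearMap
        ∘ₗ TensorProduct.map LinearMap.id (TensorProduct.comm k K K).toLinearMap
        ∘ₗ (TensorProduct.assoc k K K K).toLinearMap
      = LinearMap.mul' k k ∘ₗ TensorProduct.map (LinearMap.mul' k k ∘ₗ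
          TensorProduct.map η.toLinearMap φ) η.toLinearMap := by
    refine TensorProduct.ext_threefold fun a b c => ?_
    simp only [LinearMap.comp_apply, LinearEquiv.coe_coe, TensorProduct.assoc_tmul,
      TensorProduct.map_tmul, TensorProduct.comm_tmul, TensorProduct.assoc_symm_tmul,
      LinearMap.id_apply, LinearMap.mul'_apply, AlgHom.toLinearMap_apply, map_mul]
    ring
  calc _ = (LinearMap.mul' k k ∘ₗ TensorProduct.map (LinearMap.mul' k k ∘ₗ
          TensorProduct.map η.toLinearMap φ) η.toLinearMap)
        ∘ₗ TensorProduct.map Coalgebra.comul (HopfAlgebra.antipode k) ∘ₗ Coalgebra.comul := by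
        rw [← h_char]; rfl
    _ = _ := congrArg (LinearMap.mul' k k ∘ₗ · ∘ₗ Coalgebra.comul)
        (TensorProduct.map_comp _ _ _ _).symm

theorem crossedComodule_condition_ii_on_characters_general
    (k : Type*) [Field k]
    (K : Type*) [Ring K] [HopfAlgebra k K]
    (L : Type*) [Ring L] [HopfAlgebra k L]
    (ζ : K →ₐc[k] L)
    (ρ : L →ₐ[k] K ⊗[k] L)
    -- condition (ii): ρ ∘ ζ = (id_K ⊗ ζ) ∘ coad_K
    (h_ii : ∀ x : K,
      ρ (ζ x) = (TensorProduct.map LinearMap.id (ζ : K →ₗ[k] L)) (hopfCoad x)) :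
    ∀ (η : K →ₐ[k] k) (ψ : L →ₐ[k] k),
      (coactConv ρ η.toLinearMap ψ.toLinearMap) ∘ₗ (ζ : K →ₗ[k] L)
        = hopfConv
            (hopfConv η.toLinearMap (ψ.toLinearMap ∘ₗ (ζ : K →ₗ[k] L)))
            (η.toLinearMap ∘ₗ HopfAlgebra.antipode (R := k)) := by
  intro η ψ
  have hρζ : ρ.toLinearMap ∘ₗ (ζ : K →ₗ[k] L)
      = TensorProduct.map LinearMap.id (ζ : K →ₗ[k] L) ∘ₗ hopfCoad :=
    LinearMap.ext h_ii
  calc _ = LinearMap.mul' k k ∘ₗ TensorProduct.map η.toLinearMap ψ.toLinearMap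
          ∘ₗ TensorProduct.map LinearMap.id (ζ : K →ₗ[k] L) ∘ₗ hopfCoad := by
        rw [← hρζ]; rfl
    _ = LinearMap.mul' k k ∘ₗ TensorProduct.map η.toLinearMap (ψ.toLinearMap ∘ₗ ζ)
          ∘ₗ hopfCoad :=
        congrArg (LinearMap.mul' k k ∘ₗ · ∘ₗ hopfCoad) (TensorProduct.map_comp _ _ _ _).symm
    _ = _ := mul'_comp_map_comp_hopfCoad η _

/-- Condition (ii) of a crossed comodule of Hopf algebras
(`ρ ∘ ζ = (id_K ⊗ ζ) ∘ coad_K`) yields, on characters, the crossed module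
axiom (a): `(η ⋆_ρ ψ) ∘ ζ = η ⋆ (ψ ∘ ζ) ⋆ (η ∘ S_K) = η ⋆ μ(ψ) ⋆ η⁻¹` in `χ(K)`. -/
theorem crossedComodule_condition_ii_on_characters
    (k : Type*) [Field k] [CharZero k]
    (K : Type*) [Ring K] [HopfAlgebra k K]
    (L : Type*) [Ring L] [HopfAlgebra k L]
    (ζ : K →ₐc[k] L)
    (ρ : L →ₐ[k] K ⊗[k] L)
    -- coassociativity: (id_K ⊗ ρ) ∘ ρ = (Δ_K ⊗ id_L) ∘ ρ
    (h_coassoc : ∀ x : L,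
      (TensorProduct.map LinearMap.id ρ.toLinearMap) (ρ x)
        = (TensorProduct.assoc k K K L)
            ((TensorProduct.map (Coalgebra.comul (R := k)) LinearMap.id) (ρ x)))
    -- counitality: (ε_K ⊗ id_L) ∘ ρ = id_L
    (h_counit : ∀ x : L,
      (TensorProduct.lid k L)
        ((TensorProduct.map (Coalgebra.counit (R := k)) LinearMap.id) (ρ x)) = x)
    -- condition (ii): ρ ∘ ζ = (id_K ⊗ ζ) ∘ coad_K
    (h_ii : ∀ x : K,
      ρ (ζ x) = (TensorProduct.map LinearMap.id (ζ : K →ₗ[k] L)) (hopfCoad x)) :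
    ∀ (η : K →ₐ[k] k) (ψ : L →ₐ[k] k),
      (coactConv ρ η.toLinearMap ψ.toLinearMap) ∘ₗ (ζ : K →ₗ[k] L)
        = hopfConv
            (hopfConv η.toLinearMap (ψ.toLinearMap ∘ₗ (ζ : K →ₗ[k] L)))
            (η.toLinearMap ∘ₗ HopfAlgebra.antipode (R := k)) :=
  crossedComodule_condition_ii_on_characters_general k K L ζ ρ h_ii
end
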